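/- arXiv:2202.07541 — 6 statements merged into one kernel-verified Lean document; each statement's English description precedes it below -/
import Mathlib

section
/- Let M be an m × n matrix over F_q such that every column of M has at least one non-zero entry, and let s ∈ {0,…,q-1}^n and w ∈ F_q^n. Then there exists v ∈ F_q^m such that the number of indices i ∈ [n] with w_i + (vM)_i ≥ s_i is at least n - ⌊(∑_{i=0}^{n-1} s_i)/q⌋. -/
/-!
A column `M_i` with a nonzero entry makes `v ↦ (vM)_i` a surjective linear form, so each of its
fibres has `q^{m-1}` points. Coordinate `i` is bad (`w_i + (vM)_i < s_i`) exactly when this value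
lies in a set of at most `s_i` field elements, hence for at most `s_i q^{m-1}` vectors `v`.
Summing over `i`, the average number of bad coordinates is at most `(∑ s_i)/q`, and a `v` with at
most the average number of bad coordinates has at least `n - ⌊(∑ s_i)/q⌋` good ones.
-/

open Finset Matrix

theorem Equiv.card_filter_val_lt_le {α : Type*} [Fintype α] {q : ℕ} (e : α ≃ Fin q)
    (s : ℕ) : #{x | (e x : ℕ) < s} ≤ s := by
  simpa using card_le_card_of_injOn (fun x => (e x : ℕ)) (t := range s)
    (fun x hx => by simpa using hx) (fun x _ y _ h => e.injective (Fin.ext h))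

theorem AddMonoidHom.card_filter_mem_mul_card {G H : Type*} [AddGroup G] [Fintype G]
    [AddGroup H] [Fintype H] [DecidableEq H] (f : G →+ H) (hf : Function.Surjective f)
    (T : Finset H) : #{g | f g ∈ T} * Fintype.card H = #T * Fintype.card G := by
  have hfiber (t : H) : #{g | f g = t} = #{g | f g = 0} :=
    AddMonoidHom.card_fiber_eq_of_mem_range f (hf t) (hf 0)
  have hcount (S : Finset H) : #{g | f g ∈ S} = #S * #{g | f g = 0} := by
    rw [← sum_card_fiberwise_eq_card_filter, sum_congr rfl fun t _ => hfiber t, sum_const,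
      smul_eq_mul]
  have hG : Fintype.card G = Fintype.card H * #{g | f g = 0} := by
    simpa using hcount univ
  rw [hcount, hG]
  ring

theorem Matrix.surjective_vecMul_apply {m n K : Type*} [Fintype m] [DecidableEq m]
    [DivisionRing K] (M : Matrix m n K) {j : n} (hj : ∃ i, M i j ≠ 0) :
    Function.Surjective fun v : m → K => (v ᵥ* M) j := by
  obtain ⟨i, hi⟩ := hj
  exact fun x => ⟨Pi.single i (x / M i j), by simp [hi]⟩

theorem exists_card_filter_mul_le_sum {α ι : Type*} [Fintype α] [Nonempty α] [Fintype ι]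
    (P : ι → α → Prop) [∀ i a, Decidable (P i a)] (c : ι → ℕ) (q : ℕ)
    (h : ∀ i, #{a | P i a} * q ≤ c i * Fintype.card α) :
    ∃ a, #{i | P i a} * q ≤ ∑ i, c i := by
  have hsum : ∑ a, #{i | P i a} * q ≤ ∑ _a : α, ∑ i, c i :=
    calc ∑ a, #{i | P i a} * q = ∑ i, #{a | P i a} * q := by
          rw [← sum_mul, ← sum_mul]
          exact congrArg (· * q)
            (sum_card_bipartiteAbove_eq_sum_card_bipartiteBelow (fun a i => P i a))
      _ ≤ ∑ i, c i * Fintype.card α := sum_le_sum fun i _ => h i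
      _ = ∑ _a : α, ∑ i, c i := by simp [sum_mul, mul_comm]
  obtain ⟨a, -, ha⟩ := exists_le_of_sum_le univ_nonempty hsum
  exact ⟨a, ha⟩

theorem Matrix.card_filter_vecMul_apply_lt_mul_le {K m n : Type*} [DivisionRing K] [Fintype K]
    [Fintype m] [DecidableEq m] {q : ℕ} (e : K ≃ Fin q) (M : Matrix m n K) {j : n}
    (hj : ∃ i, M i j ≠ 0) (s : ℕ) (w : K) :
    #{v : m → K | (e (w + (v ᵥ* M) j) : ℕ) < s} * q ≤ s * Fintype.card (m → K) := by
  classical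
  let f : (m → K) →+ K := (LinearMap.proj j ∘ₗ M.vecMulLinear).toAddMonoidHom
  have hcount := f.card_filter_mem_mul_card (M.surjective_vecMul_apply hj)
    {x | (((Equiv.addLeft w).trans e) x : ℕ) < s}
  simp only [f, Fintype.card_congr e, Fintype.card_fin, mem_filter, mem_univ, true_and] at hcount
  exact hcount.trans_le
    (Nat.mul_le_mul_right _ (((Equiv.addLeft w).trans e).card_filter_val_lt_le s))

theorem exists_vecMul_masking_general (F : Type) [Field F] [Fintype F]
    (q m n : ℕ) (ι : F ≃ Fin q)
    (M : Matrix (Fin m) (Fin n) F) (hcol : ∀ j : Fin n, ∃ i : Fin m, M i j ≠ 0)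
    (s : Fin n → ℕ) (w : Fin n → F) :
    ∃ v : Fin m → F,
      n - (∑ i, s i) / q ≤
        (Finset.univ.filter (fun i : Fin n =>
          s i ≤ (ι (w i + Matrix.vecMul v M i)).val)).card := by
  have hq : 0 < q := (ι 0).pos
  obtain ⟨v, hv⟩ := exists_card_filter_mul_le_sum
    (fun i (v : Fin m → F) => (ι (w i + (v ᵥ* M) i) : ℕ) < s i) s q
    fun i => M.card_filter_vecMul_apply_lt_mul_le ι (hcol i) (s i) (w i)
  refine ⟨v, ?_⟩
  have hbad := (Nat.le_div_iff_mul_le hq).mpr hv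
  have hsplit := card_filter_add_card_filter_not (s := univ)
    (fun i : Fin n => s i ≤ (ι (w i + (v ᵥ* M) i) : ℕ))
  simp only [not_le, card_univ, Fintype.card_fin] at hsplit
  omega

/-- If every column of `M` is non-zero, then for every `w` there is a `v` such that
`w i + (v·M) i ≥ s i` (w.r.t. an identification `ι` of `F_q` with `{0,…,q-1}`) in at
least `n - ⌊(∑ s i)/q⌋` coordinates. -/
theorem exists_vecMul_masking (F : Type) [Field F] [Fintype F] [DecidableEq F]
    (q m n : ℕ) (hq : Fintype.card F = q) (ι : F ≃ Fin q)
    (M : Matrix (Fin m) (Fin n) F) (hcol : ∀ j : Fin n, ∃ i : Fin m, M i j ≠ 0)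
    (s : Fin n → ℕ) (hs : ∀ i, s i ≤ q - 1) (w : Fin n → F) :
    ∃ v : Fin m → F,
      n - (∑ i, s i) / q ≤
        (Finset.univ.filter (fun i : Fin n =>
          s i ≤ (ι (w i + Matrix.vecMul v M i)).val)).card :=
  exists_vecMul_masking_general F q m n ι M hcol s w
end

section
/- Let G be a k × n matrix over F_q and let s ≥ 1. Define d_s = min{ wt(m·G) : m ∈ F_{q^s}^k, m ≠ 0 }, where wt denotes Hamming weight and entries of G are viewed in F_{q^s}. Then d_s = d_1. -/
/-- The minimum weight of nonzero codewords of the row space of a matrix `G` over `F_q`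
is unchanged when messages are taken from an extension field `F_{q^s}`. -/
theorem min_weight_extension_eq (F K : Type) [Field F] [Fintype F] [DecidableEq F]
    [Field K] [Fintype K] [DecidableEq K] [Algebra F K]
    (k n : ℕ) (hk : 0 < k) (G : Matrix (Fin k) (Fin n) F) :
    sInf {w : ℕ | ∃ m : Fin k → K, m ≠ 0 ∧
        w = hammingNorm (Matrix.vecMul m (G.map (algebraMap F K)))} =
      sInf {w : ℕ | ∃ m : Fin k → F, m ≠ 0 ∧ w = hammingNorm (Matrix.vecMul m G)} := by
  set SK := {w : ℕ | ∃ m : Fin k → K, m ≠ 0 ∧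
      w = hammingNorm (Matrix.vecMul m (G.map (algebraMap F K)))}
  set SF := {w : ℕ | ∃ m : Fin k → F, m ≠ 0 ∧ w = hammingNorm (Matrix.vecMul m G)}
  have hinj : Function.Injective (algebraMap F K) := (algebraMap F K).injective
  -- F-nonempty
  have hFne : SF.Nonempty := by
    refine ⟨_, fun i => if i = ⟨0, hk⟩ then 1 else 0, ?_, rfl⟩
    intro h
    have := congrFun h ⟨0, hk⟩
    simp at this
  -- SK ≤ SF : each element of SF gives element of SK with same value
  have hsub : SF ⊆ SK := by
    rintro w ⟨m, hm, rfl⟩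
    refine ⟨fun i => algebraMap F K (m i), ?_, ?_⟩
    · intro h
      apply hm
      funext i
      have := congrFun h i
      simpa using hinj (by simpa using this)
    · have : (Matrix.vecMul (fun i => algebraMap F K (m i)) (G.map (algebraMap F K)))
          = fun j => algebraMap F K (Matrix.vecMul m G j) := by
        funext j
        simp [Matrix.vecMul, dotProduct, Matrix.map_apply, map_sum]
      rw [this]
      exact (hammingNorm_comp (fun _ (c : F) => algebraMap F K c)
        (fun _ => hinj) (fun _ => map_zero _)).symm
  apply le_antisymm
  · exact le_csInf hFne fun w hw => Nat.sInf_le (hsub hw)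
  · -- for each w ∈ SK, find w' ∈ SF with w' ≤ w
    have hKne : SK.Nonempty := hFne.mono hsub
    obtain ⟨m, hm, hw⟩ := Nat.sInf_mem hKne
    -- pick i0 with m i0 ≠ 0, and a coordinate functional φ with φ (m i0) ≠ 0
    obtain ⟨i0, hi0⟩ := Function.ne_iff.mp hm
    have : Module.Finite F K := Module.Finite.of_finite
    let b := Module.finBasis F K
    have hrepr : b.repr (m i0) ≠ 0 := by
      simpa using (b.repr.map_ne_zero_iff.mpr (by simpa using hi0))
    obtain ⟨j0, hj0⟩ := Function.ne_iff.mp (fun h => hrepr (Finsupp.ext fun j => congrFun h j))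
    let φ : K →ₗ[F] F := b.coord j0
    have hφ0 : φ (m i0) ≠ 0 := hj0
    set m' : Fin k → F := fun i => φ (m i) with hm'
    have hm'ne : m' ≠ 0 := fun h => hφ0 (by simpa [m'] using congrFun h i0)
    have key : ∀ j, Matrix.vecMul m' G j = φ (Matrix.vecMul m (G.map (algebraMap F K)) j) := by
      intro j
      simp only [Matrix.vecMul, dotProduct, Matrix.map_apply, map_sum]
      congr 1
      funext i
      have : m i * algebraMap F K (G i j) = G i j • m i := by
        rw [Algebra.smul_def, mul_comm]
      rw [this, map_smul, smul_eq_mul, mul_comm]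
    have hle : hammingNorm (Matrix.vecMul m' G)
        ≤ hammingNorm (Matrix.vecMul m (G.map (algebraMap F K))) := by
      have : Matrix.vecMul m' G
          = fun j => φ (Matrix.vecMul m (G.map (algebraMap F K)) j) := funext key
      rw [this]
      exact hammingNorm_comp_le_hammingNorm (fun _ c => φ c) (fun _ => map_zero _)
    calc sInf SF ≤ hammingNorm (Matrix.vecMul m' G) := Nat.sInf_le ⟨m', hm'ne, rfl⟩
      _ ≤ _ := hle
      _ = sInf SK := hw.symm
end

section
/- Let q be a prime power, 1 ≤ s ≤ k < n, and suppose C_s is an [n,s]_q linear code with minimum distance ≥ d. If ∑_{i=0}^{d-1} C(n,i)(q-1)^i < q^{n-k+1}, then there exists an [n,k]_q linear code C_k with minimum distance ≥ d containing C_s as a subcode. -/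
/-!
Gilbert's covering argument, one dimension at a time: a code `C` of dimension `t < k` has
`q ^ t` codewords, so the Hamming balls of radius `d - 1` around them cover at most
`q ^ t * hammingVolume q n d < q ^ (t + n - k + 1) ≤ q ^ n` words. Any word `x` outside
them is at distance `≥ d` from `C`, and then every `c + a • x` with `a ≠ 0` has weight
`hammingDist x (-a⁻¹ • c) ≥ d`, so `C ⊔ span {x}` still has minimum distance `≥ d`.
-/

open Finset Fintype

-- The number of words of length `n` over a `q`-letter alphabet at distance `< r` from a given one.
def hammingVolume (q n r : ℕ) : ℕ :=
  ∑ i ∈ range r, n.choose i * (q - 1) ^ i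

section Counting

variable {ι β : Type*} [Fintype ι] [DecidableEq ι] [Fintype β] [DecidableEq β]

theorem filter_disagreement_eq_piFinset (c : ι → β) (s : Finset ι) :
    ({x | ({j | x j ≠ c j} : Finset ι) = s} : Finset (ι → β)) =
      piFinset fun j => if j ∈ s then univ.erase (c j) else {c j} := by
  ext x
  rw [mem_filter, mem_piFinset, Finset.ext_iff]
  simp only [mem_univ, true_and, mem_filter]
  refine forall_congr' fun j => ?_
  split_ifs with hj <;> simp [hj]

theorem card_filter_disagreement_eq (c : ι → β) (s : Finset ι) :
    #({x | ({j | x j ≠ c j} : Finset ι) = s} : Finset (ι → β)) = (card β - 1) ^ #s := by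
  rw [filter_disagreement_eq_piFinset, card_piFinset]
  simp only [apply_ite card, card_erase_of_mem (mem_univ _), card_univ, card_singleton]
  rw [Fintype.prod_ite_mem, prod_const]

theorem card_filter_hammingDist_eq (c : ι → β) (i : ℕ) :
    #{x : ι → β | hammingDist x c = i} = (card ι).choose i * (card β - 1) ^ i := by
  have hfibre : ∀ s ∈ powersetCard i univ,
      #{x ∈ {x : ι → β | hammingDist x c = i} | ({j | x j ≠ c j} : Finset ι) = s} =
        (card β - 1) ^ i := by
    intro s hs
    rw [filter_filter, ← (mem_powersetCard.1 hs).2, ← card_filter_disagreement_eq c s]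
    congr 1
    ext x
    simp only [mem_filter, mem_univ, true_and, and_iff_right_iff_imp]
    rintro rfl
    rfl
  rw [card_eq_sum_card_fiberwise (f := fun x : ι → β => ({j | x j ≠ c j} : Finset ι))
    (s := {x : ι → β | hammingDist x c = i}) (t := powersetCard i univ)
    (fun x hx => mem_powersetCard.2 ⟨subset_univ _, (mem_filter.1 hx).2⟩),
    sum_congr rfl hfibre, sum_const, card_powersetCard, card_univ, smul_eq_mul]

theorem card_filter_hammingDist_lt (c : ι → β) (r : ℕ) :
    #{x : ι → β | hammingDist x c < r} = hammingVolume (card β) (card ι) r := by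
  rw [hammingVolume, card_eq_sum_card_fiberwise (f := fun x => hammingDist x c)
    (s := {x : ι → β | hammingDist x c < r}) (t := range r)
    (fun x hx => mem_range.2 (mem_filter.1 hx).2)]
  refine sum_congr rfl fun i hi => ?_
  rw [filter_filter, ← card_filter_hammingDist_eq c i]
  congr 1
  ext x
  simp only [mem_filter, mem_univ, true_and, and_iff_right_iff_imp]
  exact fun h => h ▸ mem_range.1 hi

theorem exists_forall_le_hammingDist (S : Finset (ι → β)) (r : ℕ)
    (h : #S * hammingVolume (card β) (card ι) r < card β ^ card ι) :
    ∃ x : ι → β, ∀ c ∈ S, r ≤ hammingDist x c := by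
  by_contra! hcover
  have hunion : (univ : Finset (ι → β)) ⊆ S.biUnion fun c => {x | hammingDist x c < r} :=
    fun x _ => by simpa using hcover x
  have := (card_le_card hunion).trans card_biUnion_le
  simp only [card_filter_hammingDist_lt, sum_const, smul_eq_mul, card_univ, card_fun] at this
  omega

end Counting

section Codes

variable {K ι : Type*} [Field K] [DecidableEq K] [Fintype ι]

def HasMinDistAtLeast (C : Submodule K (ι → K)) (d : ℕ) : Prop :=
  ∀ c ∈ C, c ≠ 0 → d ≤ hammingNorm c

theorem HasMinDistAtLeast.sup_span_singleton {C : Submodule K (ι → K)} {d : ℕ} {x : ι → K}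
    (hC : HasMinDistAtLeast C d) (hx : ∀ c ∈ C, d ≤ hammingDist x c) :
    HasMinDistAtLeast (C ⊔ K ∙ x) d := by
  intro y hy hy0
  obtain ⟨c, hc, z, hz, rfl⟩ := Submodule.mem_sup.1 hy
  obtain ⟨a, rfl⟩ := Submodule.mem_span_singleton.1 hz
  rcases eq_or_ne a 0 with rfl | ha
  · rw [zero_smul, add_zero] at hy0 ⊢
    exact hC c hc hy0
  · have : c + a • x = a • (-(-(a⁻¹ • c)) + x) := by
      rw [neg_neg, smul_add, smul_smul, mul_inv_cancel₀ ha, one_smul]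
    rw [this, hammingNorm_smul fun _ => .of_ne_zero ha, ← hammingDist_eq_hammingNorm,
      hammingDist_comm]
    exact hx _ (C.neg_mem (C.smul_mem _ hc))

open Module

theorem exists_notMem_forall_le_hammingDist [Fintype K] {C : Submodule K (ι → K)} {k d : ℕ}
    (hCk : finrank K C < k) (hk : k ≤ card ι)
    (hV : hammingVolume (card K) (card ι) d < card K ^ (card ι - k + 1)) :
    ∃ x ∉ C, ∀ c ∈ C, d ≤ hammingDist x c := by
  classical
  have hq : 1 < card K := Fintype.one_lt_card
  -- Radius `max d 1` also excludes the codewords themselves when `d = 0`.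
  have hV' : hammingVolume (card K) (card ι) (max d 1) < card K ^ (card ι - k + 1) := by
    rcases Nat.eq_zero_or_pos d with rfl | hd
    · simpa [hammingVolume] using Nat.one_lt_pow (Nat.succ_ne_zero (card ι - k)) hq
    · rwa [max_eq_left hd]
  have hcard : #(C : Set (ι → K)).toFinset
      * hammingVolume (card K) (card ι) (max d 1) < card K ^ card ι :=
    calc _ < card K ^ finrank K C * card K ^ (card ι - k + 1) := by
          simp only [Set.toFinset_card, SetLike.coe_sort_coe, card_eq_pow_finrank (K := K) (V := C)]
          exact Nat.mul_lt_mul_of_pos_left hV' (by positivity)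
      _ ≤ card K ^ card ι := by
          rw [← pow_add]
          exact Nat.pow_le_pow_right (by omega) (by omega)
  obtain ⟨x, hx⟩ := exists_forall_le_hammingDist _ _ hcard
  refine ⟨x, fun hxC => ?_, fun c hc => (le_max_left d 1).trans (hx c (by simpa using hc))⟩
  simpa using hx x (by simpa using hxC)

theorem HasMinDistAtLeast.exists_extension [Fintype K] {C : Submodule K (ι → K)} {k d : ℕ}
    (hC : HasMinDistAtLeast C d) (hCk : finrank K C ≤ k) (hk : k ≤ card ι)
    (hV : hammingVolume (card K) (card ι) d < card K ^ (card ι - k + 1)) :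
    ∃ C' : Submodule K (ι → K), finrank K C' = k ∧ C ≤ C' ∧ HasMinDistAtLeast C' d := by
  induction hm : k - finrank K C generalizing C with
  | zero => exact ⟨C, by omega, le_rfl, hC⟩
  | succ m ih =>
    obtain ⟨x, hxC, hx⟩ := exists_notMem_forall_le_hammingDist (C := C) (by omega) hk hV
    have hrank := Submodule.finrank_sup_span_singleton hxC
    obtain ⟨C', hC'k, hCC', hC'⟩ :=
      ih (C := C ⊔ K ∙ x) (hC.sup_span_singleton hx) (by omega) (by omega)
    exact ⟨C', hC'k, le_sup_left.trans hCC', hC'⟩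

end Codes

theorem gilbert_extension_general (F : Type) [Field F] [Fintype F] [DecidableEq F]
    (q n k s d : ℕ) (hq : Fintype.card F = q)
    (hsk : s ≤ k) (hkn : k < n)
    (Cs : Submodule F (Fin n → F)) (hdimCs : Module.finrank F Cs = s)
    (hCsd : ∀ c ∈ Cs, c ≠ 0 → d ≤ hammingNorm c)
    (hGV : ∑ i ∈ Finset.range d, n.choose i * (q - 1) ^ i < q ^ (n - k + 1)) :
    ∃ Ck : Submodule F (Fin n → F), Module.finrank F Ck = k ∧ Cs ≤ Ck ∧
      ∀ c ∈ Ck, c ≠ 0 → d ≤ hammingNorm c := by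
  subst hq
  rw [← Fintype.card_fin n] at hGV
  exact HasMinDistAtLeast.exists_extension (C := Cs) hCsd (hdimCs ▸ hsk)
    (by simpa using hkn.le) hGV

/-- Refined Gilbert bound: an `[n,s]_q` code of minimum distance at least `d` extends to
an `[n,k]_q` code of minimum distance at least `d` provided
`∑_{i=0}^{d-1} C(n,i)(q-1)^i < q^{n-k+1}`. -/
theorem gilbert_extension (F : Type) [Field F] [Fintype F] [DecidableEq F]
    (q n k s d : ℕ) (hq : Fintype.card F = q)
    (hs : 1 ≤ s) (hsk : s ≤ k) (hkn : k < n)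
    (Cs : Submodule F (Fin n → F)) (hdimCs : Module.finrank F Cs = s)
    (hCsd : ∀ c ∈ Cs, c ≠ 0 → d ≤ hammingNorm c)
    (hGV : ∑ i ∈ Finset.range d, n.choose i * (q - 1) ^ i < q ^ (n - k + 1)) :
    ∃ Ck : Submodule F (Fin n → F), Module.finrank F Ck = k ∧ Cs ≤ Ck ∧
      ∀ c ∈ Ck, c ≠ 0 → d ≤ hammingNorm c :=
  gilbert_extension_general F q n k s d hq hsk hkn Cs hdimCs hCsd hGV
end

section
/- Let q be a prime power and let k, n, d, d⊥ be positive integers with k < n such that ∑_{i=0}^{d-1} C(n,i)(q-1)^i < (1/2) q^{n-k} and ∑_{i=0}^{d⊥-1} C(n,i)(q-1)^i < (1/2) q^{k}. Then there exists an [n,k]_q linear code C with minimum distance ≥ d whose dual code C⊥ has minimum distance ≥ d⊥. -/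
/-!
Choose a `k × n` generator matrix `G` at random. For a fixed message `m ≠ 0` the codeword `m ᵥ* G`
is uniformly distributed on `F^n`, and for a fixed word `x ≠ 0` the syndrome `G *ᵥ x` is uniformly
distributed on `F^k`. Union bounds over the `< q^k` messages and over the Hamming balls then show
that each of the two counting hypotheses excludes fewer than half of all matrices. A surviving `G`
is injective (as `d ≥ 1`), so its row space `C` has dimension `k`, and `C⊥ = ker G` contains
no nonzero word of weight `< d⊥`.
-/

open Finset Function Matrix

section HammingBall

variable {ι F : Type*} [Fintype ι] [DecidableEq ι] [Fintype F] [DecidableEq F] [Zero F]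

lemma card_filter_support_eq (s : Finset ι) :
    #{y : ι → F | ({i | y i ≠ 0} : Finset ι) = s} = (Fintype.card F - 1) ^ #s := by
  have : ({y : ι → F | ({i | y i ≠ 0} : Finset ι) = s} : Finset _) =
      Fintype.piFinset fun i => if i ∈ s then {0}ᶜ else {0} := by
    ext y
    simp only [mem_filter, mem_univ, true_and, Fintype.mem_piFinset, Finset.ext_iff]
    refine forall_congr' fun i => ?_
    split_ifs <;> simp [*]
  rw [this, Fintype.card_piFinset]
  simp [apply_ite, Finset.card_compl]

lemma card_filter_hammingNorm_eq (r : ℕ) :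
    #{y : ι → F | hammingNorm y = r} = (Fintype.card ι).choose r * (Fintype.card F - 1) ^ r := by
  rw [card_eq_sum_card_fiberwise (f := fun y : ι → F => ({i | y i ≠ 0} : Finset ι))
    (s := {y : ι → F | hammingNorm y = r}) (t := powersetCard r univ)
    (fun y hy => by simpa [hammingNorm] using hy)]
  rw [sum_congr rfl fun s hs => ?_, sum_const, card_powersetCard, card_univ, smul_eq_mul]
  have hs := (mem_powersetCard.1 hs).2
  rw [← hs, ← card_filter_support_eq s (F := F), filter_filter]
  congr 1
  ext y
  simp only [mem_filter, mem_univ, true_and, hammingNorm, and_iff_right_iff_imp]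
  rintro rfl
  rfl

lemma card_filter_hammingNorm_lt (d : ℕ) :
    #{y : ι → F | hammingNorm y < d} =
      ∑ r ∈ range d, (Fintype.card ι).choose r * (Fintype.card F - 1) ^ r := by
  rw [card_eq_sum_card_fiberwise (f := hammingNorm) (t := range d)
    (fun y hy => by simpa using hy)]
  refine sum_congr rfl fun r hr => ?_
  rw [← card_filter_hammingNorm_eq, filter_filter]
  congr 1
  ext y
  simp only [mem_filter, mem_univ, true_and, and_iff_right_iff_imp]
  rintro rfl
  exact mem_range.1 hr

end HammingBall

section UniformPreimage

variable {M N Φ ι : Type*} [AddGroup M] [AddGroup N] [Fintype M] [Fintype N] [DecidableEq N]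
  [FunLike Φ M N] [AddMonoidHomClass Φ M N]

lemma card_filter_map_mem_mul_card (φ : Φ) (hφ : Surjective φ) (S : Finset N) :
    #{x : M | φ x ∈ S} * Fintype.card N = #S * Fintype.card M := by
  have fiber (y : N) : #{x : M | φ x = y} = #{x : M | φ x = 0} :=
    AddMonoidHom.card_fiber_eq_of_mem_range φ (hφ y) (hφ 0)
  have preimage (T : Finset N) : #{x : M | φ x ∈ T} = #T * #{x : M | φ x = 0} := by
    rw [card_eq_sum_card_fiberwise (f := φ) (t := T) (fun x hx => by simpa using hx),
      sum_congr rfl fun y hy => ?_, sum_const, smul_eq_mul]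
    rw [filter_filter, ← fiber y]
    congr 1
    ext x
    simp only [mem_filter, mem_univ, true_and, and_iff_right_iff_imp]
    rintro rfl
    exact hy
  have hM := preimage univ
  simp only [mem_univ, filter_true, card_univ] at hM
  rw [preimage S, hM]
  ring

lemma two_mul_card_filter_exists_lt {φ : ι → Φ} {s : Finset ι} (hφ : ∀ i ∈ s, Surjective (φ i))
    {S : Finset N} (hS : 2 * (#s * #S) < Fintype.card N) :
    2 * #{x : M | ∃ i ∈ s, φ i x ∈ S} < Fintype.card M := by
  classical
  have union_bound : #{x : M | ∃ i ∈ s, φ i x ∈ S} ≤ ∑ i ∈ s, #{x : M | φ i x ∈ S} := by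
    refine (card_le_card fun x hx => ?_).trans card_biUnion_le
    obtain ⟨i, hi, hx⟩ := (mem_filter.1 hx).2
    exact mem_biUnion.2 ⟨i, hi, by simpa using hx⟩
  refine Nat.lt_of_mul_lt_mul_right (a := Fintype.card N) ?_
  calc 2 * #{x : M | ∃ i ∈ s, φ i x ∈ S} * Fintype.card N
      ≤ 2 * (∑ i ∈ s, #{x : M | φ i x ∈ S}) * Fintype.card N :=
        Nat.mul_le_mul_right _ (Nat.mul_le_mul_left 2 union_bound)
    _ = 2 * (#s * #S) * Fintype.card M := by
        rw [mul_assoc, sum_mul,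
          sum_congr rfl fun i hi => card_filter_map_mem_mul_card (φ i) (hφ i hi) S, sum_const,
          smul_eq_mul]
        ring
    _ < Fintype.card M * Fintype.card N := by
        rw [mul_comm (Fintype.card M)]; gcongr

end UniformPreimage

section GeneratorMatrix

variable {ι κ F : Type*} [Fintype ι] [Field F]

lemma vecMulBilin_surjective {m : ι → F} (hm : m ≠ 0) :
    Surjective (vecMulBilin F F m : Matrix ι κ F →ₗ[F] κ → F) := by
  classical
  obtain ⟨j, hj⟩ := Function.ne_iff.1 hm
  intro y
  refine ⟨vecMulVec (Pi.single j (m j)⁻¹) y, ?_⟩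
  rw [vecMulBilin_apply, vecMul_vecMulVec, dotProduct_single, mul_inv_cancel₀ hj, one_smul]

lemma mulVecBilin_flip_surjective {x : ι → F} (hx : x ≠ 0) :
    Surjective ((mulVecBilin F F).flip x : Matrix κ ι F →ₗ[F] κ → F) := by
  intro y
  obtain ⟨G, hG⟩ := vecMulBilin_surjective (κ := κ) hx y
  refine ⟨Gᵀ, ?_⟩
  rw [LinearMap.flip_apply, mulVecBilin_apply, ← vecMul_transpose, transpose_transpose, ← hG]
  rfl

lemma finrank_range_vecMulLinear {G : Matrix ι κ F} (hG : ∀ m, m ≠ 0 → m ᵥ* G ≠ 0) :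
    Module.finrank F (LinearMap.range G.vecMulLinear) = Fintype.card ι := by
  have : Injective G.vecMulLinear := by
    rw [← LinearMap.ker_eq_bot, LinearMap.ker_eq_bot']
    exact fun m hm => not_not.1 fun h => hG m h hm
  rw [LinearMap.finrank_range_of_inj this, Module.finrank_fintype_fun_eq_card]

lemma mulVec_eq_zero_of_forall_dotProduct_eq_zero [Fintype κ] [DecidableEq ι]
    {G : Matrix ι κ F} {x : κ → F} (hx : ∀ c ∈ LinearMap.range G.vecMulLinear, x ⬝ᵥ c = 0) :
    G *ᵥ x = 0 := by
  ext j
  rw [mulVec, dotProduct_comm, Pi.zero_apply]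
  exact hx _ ⟨Pi.single j 1, single_one_vecMul j G⟩

lemma exists_matrix_forall_vecMul_and_mulVec [DecidableEq ι] [Fintype κ] [DecidableEq κ]
    [Fintype F] [DecidableEq F] {d dperp : ℕ}
    (hd : 2 * (Fintype.card (ι → F) * #{y : κ → F | hammingNorm y < d}) < Fintype.card (κ → F))
    (hdperp : 2 * #{x : κ → F | hammingNorm x < dperp} < Fintype.card (ι → F)) :
    ∃ G : Matrix ι κ F, (∀ m, m ≠ 0 → d ≤ hammingNorm (m ᵥ* G)) ∧
      ∀ x, x ≠ 0 → hammingNorm x < dperp → G *ᵥ x ≠ 0 := by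
  set bad₁ : Finset (Matrix ι κ F) := {G | ∃ m : ι → F, m ≠ 0 ∧ hammingNorm (m ᵥ* G) < d}
  set bad₂ : Finset (Matrix ι κ F) :=
    {G | ∃ x : κ → F, (x ≠ 0 ∧ hammingNorm x < dperp) ∧ G *ᵥ x = 0}
  have h₁ : 2 * #bad₁ < Fintype.card (Matrix ι κ F) := by
    simpa using two_mul_card_filter_exists_lt (M := Matrix ι κ F)
      (s := {m : ι → F | m ≠ 0}) (S := {y : κ → F | hammingNorm y < d})
      (fun m hm => vecMulBilin_surjective (mem_filter.1 hm).2)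
      ((Nat.mul_le_mul_left 2 (Nat.mul_le_mul_right _ (card_le_univ _))).trans_lt hd)
  have h₂ : 2 * #bad₂ < Fintype.card (Matrix ι κ F) := by
    have hs : #{x : κ → F | x ≠ 0 ∧ hammingNorm x < dperp} ≤
        #{x : κ → F | hammingNorm x < dperp} :=
      card_le_card (monotone_filter_right _ fun _ _ => And.right)
    simpa using two_mul_card_filter_exists_lt (M := Matrix ι κ F)
      (s := {x : κ → F | x ≠ 0 ∧ hammingNorm x < dperp}) (S := {0})
      (fun x hx => mulVecBilin_flip_surjective (mem_filter.1 hx).2.1)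
      (by rw [card_singleton, mul_one]; omega)
  obtain ⟨G, -, hG⟩ := exists_mem_notMem_of_card_lt_card (s := bad₁ ∪ bad₂) (t := univ)
    ((card_union_le _ _).trans_lt (by rw [card_univ]; omega))
  exact ⟨G, by simpa [bad₁, bad₂] using hG⟩

end GeneratorMatrix

theorem gv_code_with_dual_distance_general (F : Type) [Field F] [Fintype F] [DecidableEq F]
    (q n k d dperp : ℕ) (hq : Fintype.card F = q)
    (hkn : k < n) (hd : 1 ≤ d)
    (h1 : 2 * ∑ i ∈ Finset.range d, n.choose i * (q - 1) ^ i < q ^ (n - k))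
    (h2 : 2 * ∑ i ∈ Finset.range dperp, n.choose i * (q - 1) ^ i < q ^ k) :
    ∃ C : Submodule F (Fin n → F), Module.finrank F C = k ∧
      (∀ c ∈ C, c ≠ 0 → d ≤ hammingNorm c) ∧
      (∀ x : Fin n → F, (∀ c ∈ C, ∑ i, x i * c i = 0) → x ≠ 0 → dperp ≤ hammingNorm x) := by
  subst hq
  have hpow : Fintype.card F ^ n = Fintype.card F ^ k * Fintype.card F ^ (n - k) := by
    rw [← pow_add, Nat.add_sub_cancel' hkn.le]
  obtain ⟨G, hG, hker⟩ := exists_matrix_forall_vecMul_and_mulVec (ι := Fin k) (κ := Fin n)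
    (F := F) (d := d) (dperp := dperp)
    (by
      simp only [card_filter_hammingNorm_lt, Fintype.card_fun, Fintype.card_fin, hpow]
      rw [mul_left_comm]
      exact Nat.mul_lt_mul_of_pos_left h1 (pow_pos Fintype.card_pos k))
    (by simpa only [card_filter_hammingNorm_lt, Fintype.card_fun, Fintype.card_fin])
  refine ⟨LinearMap.range G.vecMulLinear, (finrank_range_vecMulLinear fun m hm h => ?_).trans
    (Fintype.card_fin k), ?_, fun x hx hx0 => ?_⟩
  · have hdm := hG m hm
    rw [h, hammingNorm_zero] at hdm
    omega
  · rintro _ ⟨m, rfl⟩ hc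
    exact hG m fun hm => hc (by rw [hm, vecMulLinear_apply, zero_vecMul])
  · by_contra! hlt
    exact hker x hx0 hlt (mulVec_eq_zero_of_forall_dotProduct_eq_zero hx)

/-- A Gilbert–Varshamov type bound for codes with a designed dual distance: under the
two counting conditions there is an `[n,k]_q` code with minimum distance at least `d`
whose dual has minimum distance at least `d⊥`. -/
theorem gv_code_with_dual_distance (F : Type) [Field F] [Fintype F] [DecidableEq F]
    (q n k d dperp : ℕ) (hq : Fintype.card F = q)
    (hk : 1 ≤ k) (hkn : k < n) (hd : 1 ≤ d) (hdp : 1 ≤ dperp)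
    (h1 : 2 * ∑ i ∈ Finset.range d, n.choose i * (q - 1) ^ i < q ^ (n - k))
    (h2 : 2 * ∑ i ∈ Finset.range dperp, n.choose i * (q - 1) ^ i < q ^ k) :
    ∃ C : Submodule F (Fin n → F), Module.finrank F C = k ∧
      (∀ c ∈ C, c ≠ 0 → d ≤ hammingNorm c) ∧
      (∀ x : Fin n → F, (∀ c ∈ C, ∑ i, x i * c i = 0) → x ≠ 0 → dperp ≤ hammingNorm x) :=
  gv_code_with_dual_distance_general F q n k d dperp hq hkn hd h1 h2
end

section
/- Let k, n, d, d⊥ be positive integers with k < n such that ∑_{i=0}^{d-1} C(n,i) < (1/4)·2^{n-k} and ∑_{i=0}^{d⊥-1} C(n,i) < (1/2)·2^{k}. Then there exists a binary [n,k] linear code C with minimum distance ≥ d containing no word of weight greater than n-d+1, such that C⊥ has minimum distance ≥ d⊥. -/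
/-!
Choose the generator matrix `G` (a `k × n` matrix over `𝔽₂`) uniformly at random and let the code
be its row space. For a fixed message `m ≠ 0` the codeword `m G` is uniform on `𝔽₂ⁿ`, so it falls
into the set `E` of words of weight `< d` or `> n - d + 1` with probability `|E| / 2ⁿ`; adding the
all-ones word maps the heavy words of `E` injectively to light ones, so `|E| ≤ 2 V(d)`, where
`V(d) = ∑_{i<d} C(n,i)`, and the union over the `2ᵏ` messages has probability `< 1/2`.
Dually, for a fixed `x ≠ 0` the syndrome `G x` is uniform on `𝔽₂ᵏ`, so `x` lies in the dual code
with probability `2⁻ᵏ`, and the union over the `< V(d⊥)` light words `x` again has probability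
`< 1/2`. Hence some `G` avoids both events; since `0 ∈ E`, its encoding map is injective.
-/

open Finset Matrix

theorem AddMonoidHom.card_filter_mem_mul_card_of_surjective {G H : Type*} [AddGroup G]
    [AddMonoid H] [Fintype G] [Fintype H] [DecidableEq H] (f : G →+ H)
    (hf : Function.Surjective f) (S : Finset H) :
    #{g | f g ∈ S} * Fintype.card H = #S * Fintype.card G := by
  have hcount (T : Finset H) : #{g | f g ∈ T} = #T * #{g | f g = 0} := by
    rw [← sum_card_fiberwise_eq_card_filter, sum_congr rfl fun h _ =>
      AddMonoidHom.card_fiber_eq_of_mem_range f (hf h) ⟨0, map_zero f⟩, sum_const, smul_eq_mul]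
  have hcard : Fintype.card G = Fintype.card H * #{g | f g = 0} := by
    simpa using hcount univ
  rw [hcount, hcard]
  ring

theorem Finset.card_biUnion_mul_le {α β : Type*} [DecidableEq β] {s : Finset α}
    {t : α → Finset β} {c a : ℕ} (h : ∀ i ∈ s, #(t i) * c ≤ a) :
    #(s.biUnion t) * c ≤ #s * a :=
  calc #(s.biUnion t) * c ≤ (∑ i ∈ s, #(t i)) * c := Nat.mul_le_mul_right _ card_biUnion_le
    _ ≤ ∑ _i ∈ s, a := by rw [sum_mul]; exact sum_le_sum h
    _ = #s * a := by rw [sum_const, smul_eq_mul]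

theorem Fintype.card_matrix (ι κ α : Type*) [Fintype ι] [Fintype κ] [DecidableEq ι]
    [DecidableEq κ] [Fintype α] :
    Fintype.card (Matrix ι κ α) = Fintype.card α ^ (Fintype.card ι * Fintype.card κ) := by
  rw [pow_mul', ← Fintype.card_fun, ← Fintype.card_fun]
  rfl

theorem Matrix.mulVec_surjective_of_ne_zero {K ι κ : Type*} [DivisionRing K] [Fintype κ]
    [DecidableEq κ] {x : κ → K} (hx : x ≠ 0) :
    Function.Surjective fun G : Matrix ι κ K => G *ᵥ x := by
  obtain ⟨w, hw⟩ : ∃ w, w ⬝ᵥ x = 1 := by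
    obtain ⟨j, hj⟩ := Function.ne_iff.mp hx
    exact ⟨Pi.single j (x j)⁻¹, by simp [single_dotProduct, inv_mul_cancel₀ hj]⟩
  exact fun v => ⟨vecMulVec v w, by simp [vecMulVec_mulVec, hw]⟩

theorem Matrix.mulVec_eq_zero_of_forall_dotProduct_vecMul_eq_zero {R ι κ : Type*} [CommRing R]
    [Fintype ι] [Fintype κ] {G : Matrix ι κ R} {x : κ → R} (h : ∀ m, x ⬝ᵥ (m ᵥ* G) = 0) :
    G *ᵥ x = 0 :=
  dotProduct_eq_zero _ fun m => by rw [dotProduct_comm, dotProduct_mulVec, dotProduct_comm, h]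

section RandomMatrix

variable {K ι κ : Type*} [DivisionRing K] [Fintype K] [DecidableEq K] [Fintype ι] [Fintype κ]
  [DecidableEq ι] [DecidableEq κ]

theorem Matrix.card_filter_mulVec_mem_mul {x : κ → K} (hx : x ≠ 0) (S : Finset (ι → K)) :
    #{G : Matrix ι κ K | G *ᵥ x ∈ S} * Fintype.card K ^ Fintype.card ι =
      #S * Fintype.card K ^ (Fintype.card ι * Fintype.card κ) := by
  have := (mulVec.addMonoidHomLeft (m := ι) x).card_filter_mem_mul_card_of_surjective
    (mulVec_surjective_of_ne_zero hx) S
  rwa [Fintype.card_fun, Fintype.card_matrix] at this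

theorem Matrix.card_filter_vecMul_mem_mul {m : ι → K} (hm : m ≠ 0) (S : Finset (κ → K)) :
    #{G : Matrix ι κ K | m ᵥ* G ∈ S} * Fintype.card K ^ Fintype.card κ =
      #S * Fintype.card K ^ (Fintype.card ι * Fintype.card κ) := by
  have htr : #{G : Matrix ι κ K | m ᵥ* G ∈ S} = #{H : Matrix κ ι K | H *ᵥ m ∈ S} :=
    card_equiv (transposeAddEquiv ι κ K).toEquiv fun G => by simp [mulVec_transpose]
  rw [htr, card_filter_mulVec_mem_mul hm, mul_comm (Fintype.card κ)]

theorem Matrix.exists_forall_vecMul_notMem_and_forall_mulVec_ne_zero {S X : Finset (κ → K)}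
    (hX₀ : 0 ∉ X)
    (hS : 2 * Fintype.card K ^ Fintype.card ι * #S ≤ Fintype.card K ^ Fintype.card κ)
    (hX : 2 * #X < Fintype.card K ^ Fintype.card ι) :
    ∃ G : Matrix ι κ K, (∀ m, m ≠ 0 → m ᵥ* G ∉ S) ∧ ∀ x ∈ X, G *ᵥ x ≠ 0 := by
  set q := Fintype.card K
  set N := q ^ (Fintype.card ι * Fintype.card κ)
  set B₁ := ({m | m ≠ 0} : Finset (ι → K)).biUnion fun m => {G : Matrix ι κ K | m ᵥ* G ∈ S}
  set B₂ := X.biUnion fun x => {G : Matrix ι κ K | G *ᵥ x ∈ ({0} : Finset (ι → K))}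
  have hB₁ : #B₁ * q ^ Fintype.card κ ≤ q ^ Fintype.card ι * (#S * N) := by
    refine (card_biUnion_mul_le fun m hm => (card_filter_vecMul_mem_mul ?_ S).le).trans ?_
    · simpa using hm
    · exact Nat.mul_le_mul_right _ ((card_le_univ _).trans_eq (by simp [q]))
  have hB₂ : #B₂ * q ^ Fintype.card ι ≤ #X * N := by
    refine (card_biUnion_mul_le fun x hx => (card_filter_mulVec_mem_mul ?_ _).le).trans ?_
    · exact ne_of_mem_of_not_mem hx hX₀
    · rw [card_singleton, one_mul]
  have hq : 0 < q := Fintype.card_pos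
  have hN : 0 < N := by positivity
  have h₁ : 2 * #B₁ ≤ N :=
    Nat.le_of_mul_le_mul_right (c := q ^ Fintype.card κ) (by nlinarith) (by positivity)
  have h₂ : 2 * #B₂ < N := Nat.lt_of_mul_lt_mul_right (a := q ^ Fintype.card ι) (by nlinarith)
  have hB : #(B₁ ∪ B₂) < #(univ : Finset (Matrix ι κ K)) := by
    rw [card_univ, Fintype.card_matrix]
    change _ < N
    have := card_union_le B₁ B₂
    omega
  obtain ⟨G, -, hG⟩ := exists_mem_notMem_of_card_lt_card hB
  simp only [B₁, B₂, mem_union, mem_biUnion, mem_filter, mem_univ, true_and, mem_singleton,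
    not_or, not_exists, not_and] at hG
  exact ⟨G, hG.1, hG.2⟩

end RandomMatrix

section Binary

variable {ι : Type*} [Fintype ι]

theorem hammingNorm_add_one (x : ι → ZMod 2) :
    hammingNorm (x + 1) = Fintype.card ι - hammingNorm x := by
  classical
  have hsupp : ({i | (x + 1) i ≠ 0} : Finset ι) = ({i | x i ≠ 0} : Finset ι)ᶜ := by
    ext i
    simp only [mem_filter, mem_univ, true_and, mem_compl, Pi.add_apply, Pi.one_apply]
    generalize x i = a
    revert a
    decide
  rw [hammingNorm, hsupp, card_compl, hammingNorm]

variable [DecidableEq ι]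

theorem card_filter_hammingNorm_eq_le (i : ℕ) :
    #{x : ι → ZMod 2 | hammingNorm x = i} ≤ (Fintype.card ι).choose i := by
  refine (card_le_card_of_injOn (fun x => ({j | x j ≠ 0} : Finset ι)) ?_ ?_).trans_eq
    (card_powersetCard i univ)
  · intro x hx
    simpa [mem_powersetCard, hammingNorm] using hx
  · intro x _ y _ hxy
    funext j
    have hj := congrArg (j ∈ ·) hxy
    simp only [mem_filter, mem_univ, true_and, eq_iff_iff] at hj
    generalize x j = a, y j = b at hj
    revert a b
    decide

theorem card_filter_hammingNorm_lt_le (d : ℕ) :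
    #{x : ι → ZMod 2 | hammingNorm x < d} ≤ ∑ i ∈ range d, (Fintype.card ι).choose i :=
  calc #{x : ι → ZMod 2 | hammingNorm x < d}
      = ∑ i ∈ range d, #{x : ι → ZMod 2 | hammingNorm x = i} := by
        simp [sum_card_fiberwise_eq_card_filter]
    _ ≤ _ := sum_le_sum fun i _ => card_filter_hammingNorm_eq_le i

theorem card_filter_lt_hammingNorm_le (d : ℕ) :
    #{x : ι → ZMod 2 | Fintype.card ι - d + 1 < hammingNorm x} ≤
      #{x : ι → ZMod 2 | hammingNorm x < d} := by
  refine card_le_card_of_injOn (· + 1) (fun x hx => ?_) (add_left_injective 1).injOn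
  simp only [coe_filter, mem_univ, true_and, Set.mem_ofPred_eq] at hx ⊢
  have := hammingNorm_le_card_fintype (x := x)
  rw [hammingNorm_add_one]
  omega

theorem card_filter_hammingNorm_lt_or_lt_le (d : ℕ) :
    #{x : ι → ZMod 2 | hammingNorm x < d ∨ Fintype.card ι - d + 1 < hammingNorm x} ≤
      2 * ∑ i ∈ range d, (Fintype.card ι).choose i := by
  rw [filter_or]
  have := card_filter_lt_hammingNorm_le (ι := ι) d
  have := card_filter_hammingNorm_lt_le (ι := ι) d
  have := card_union_le {x : ι → ZMod 2 | hammingNorm x < d}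
    {x : ι → ZMod 2 | Fintype.card ι - d + 1 < hammingNorm x}
  omega

end Binary

theorem gv_binary_code_with_weight_cap_general (n k d dperp : ℕ)
    (hkn : k < n) (hd : 1 ≤ d)
    (h1 : 4 * ∑ i ∈ Finset.range d, n.choose i < 2 ^ (n - k))
    (h2 : 2 * ∑ i ∈ Finset.range dperp, n.choose i < 2 ^ k) :
    ∃ C : Submodule (ZMod 2) (Fin n → ZMod 2), Module.finrank (ZMod 2) C = k ∧
      (∀ c ∈ C, c ≠ 0 → d ≤ hammingNorm c) ∧
      (∀ c ∈ C, hammingNorm c ≤ n - d + 1) ∧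
      (∀ x : Fin n → ZMod 2, (∀ c ∈ C, ∑ i, x i * c i = 0) → x ≠ 0 →
        dperp ≤ hammingNorm x) := by
  set E : Finset (Fin n → ZMod 2) := {x | hammingNorm x < d ∨ n - d + 1 < hammingNorm x}
  set X : Finset (Fin n → ZMod 2) := {x | x ≠ 0 ∧ hammingNorm x < dperp}
  have hE : 2 * 2 ^ k * #E ≤ 2 ^ n := by
    have hcard : #E ≤ 2 * ∑ i ∈ range d, n.choose i := by
      simpa using card_filter_hammingNorm_lt_or_lt_le (ι := Fin n) d
    calc 2 * 2 ^ k * #E = 2 ^ k * (2 * #E) := by ring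
      _ ≤ 2 ^ k * 2 ^ (n - k) := Nat.mul_le_mul_left _ (by omega)
      _ = 2 ^ n := by rw [← pow_add, Nat.add_sub_cancel' hkn.le]
  have hX : 2 * #X < 2 ^ k := by
    have hcard : #X ≤ ∑ i ∈ range dperp, n.choose i :=
      (card_le_card (monotone_filter_right _ fun _ _ hx => hx.2)).trans
        (by simpa using card_filter_hammingNorm_lt_le (ι := Fin n) dperp)
    omega
  obtain ⟨G, hG, hGX⟩ := exists_forall_vecMul_notMem_and_forall_mulVec_ne_zero (ι := Fin k)
    (S := E) (X := X) (by simp [X]) (by simpa using hE) (by simpa using hX)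
  have hwt (m : Fin k → ZMod 2) (hm : m ≠ 0) :
      d ≤ hammingNorm (m ᵥ* G) ∧ hammingNorm (m ᵥ* G) ≤ n - d + 1 := by
    simpa [E] using hG m hm
  have hinj : Function.Injective (vecMulLinear G) := by
    refine (injective_iff_map_eq_zero _).2 fun m hm => by_contra fun hm0 => ?_
    have := (hwt m hm0).1
    rw [← vecMulLinear_apply, hm, hammingNorm_zero] at this
    omega
  refine ⟨LinearMap.range (vecMulLinear G), ?_, ?_, ?_, ?_⟩
  · rw [LinearMap.finrank_range_of_inj hinj, Module.finrank_fin_fun]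
  · rintro _ ⟨m, rfl⟩ hc
    exact (hwt m (by rintro rfl; simp at hc)).1
  · rintro _ ⟨m, rfl⟩
    obtain rfl | hm := eq_or_ne m 0
    · simp
    · exact (hwt m hm).2
  · intro x hx hx0
    by_contra! hlt
    exact hGX x (by simp [X, hx0, hlt])
      (mulVec_eq_zero_of_forall_dotProduct_vecMul_eq_zero fun m => hx _ ⟨m, rfl⟩)

/-- Binary GV-type bound with an additional upper bound on codeword weights: there is a
binary `[n,k]` code with minimum distance at least `d`, no codeword of weight greater
than `n - d + 1`, and dual minimum distance at least `d⊥`. -/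
theorem gv_binary_code_with_weight_cap (n k d dperp : ℕ)
    (hk : 1 ≤ k) (hkn : k < n) (hd : 1 ≤ d) (hdp : 1 ≤ dperp)
    (h1 : 4 * ∑ i ∈ Finset.range d, n.choose i < 2 ^ (n - k))
    (h2 : 2 * ∑ i ∈ Finset.range dperp, n.choose i < 2 ^ k) :
    ∃ C : Submodule (ZMod 2) (Fin n → ZMod 2), Module.finrank (ZMod 2) C = k ∧
      (∀ c ∈ C, c ≠ 0 → d ≤ hammingNorm c) ∧
      (∀ c ∈ C, hammingNorm c ≤ n - d + 1) ∧
      (∀ x : Fin n → ZMod 2, (∀ c ∈ C, ∑ i, x i * c i = 0) → x ≠ 0 →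
        dperp ≤ hammingNorm x) :=
  gv_binary_code_with_weight_cap_general n k d dperp hkn hd h1 h2
end

section
/- Let q be a prime power and let n, k, t, u be non-negative integers with ∑_{i=0}^{2(t+⌊u/q⌋)} C(n,i)(q-1)^i < q^{n-k+1}. Then there exists an [n,k]_q linear code with minimum distance at least 2(t+⌊u/q⌋)+1 that contains the all-one codeword. -/
/-!
Greedy Gilbert–Varshamov extension seeded with the repetition code. A code `C` of dimension
`m < k` all of whose nonzero words have weight `> r` has at most `q ^ m * V` words within
distance `r` of it, `V` the volume of a Hamming ball of radius `r`; the volume bound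
`V < q ^ (n - k + 1)` makes this less than `q ^ n`, so some `v` is at distance `> r` from `C`,
and then `C ⊔ span {v}` again has minimum distance `> r`. The same bound forces `r < n`, so the
all-one word spans a code of minimum distance `n > r` to start from.
-/

open Finset Pointwise

section HammingBall

variable {ι F : Type*} [Fintype ι] [DecidableEq ι] [Fintype F] [DecidableEq F] [Zero F]

variable (ι F) in
def hammingBall (r : ℕ) : Finset (ι → F) := {w | hammingNorm w ≤ r}

variable (F) in
def wordsWithSupport (s : Finset ι) : Finset (ι → F) :=
  Fintype.piFinset fun i => if i ∈ s then univ.erase 0 else {0}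

@[simp]
theorem mem_hammingBall {r : ℕ} {w : ι → F} : w ∈ hammingBall ι F r ↔ hammingNorm w ≤ r := by
  simp [hammingBall]

theorem mem_wordsWithSupport_support (w : ι → F) : w ∈ wordsWithSupport F {i | w i ≠ 0} := by
  rw [wordsWithSupport, Fintype.mem_piFinset]
  intro i
  by_cases hi : w i = 0 <;> simp [hi]

theorem card_wordsWithSupport (s : Finset ι) :
    #(wordsWithSupport F s) = (Fintype.card F - 1) ^ #s := by
  simp [wordsWithSupport, apply_ite Finset.card, Finset.prod_ite_mem]

theorem card_hammingBall_le (r : ℕ) :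
    #(hammingBall ι F r) ≤
      ∑ i ∈ range (r + 1), (Fintype.card ι).choose i * (Fintype.card F - 1) ^ i := by
  have hcover : hammingBall ι F r ⊆
      (range (r + 1)).biUnion fun i => (powersetCard i univ).biUnion (wordsWithSupport F) := by
    intro w hw
    simp only [mem_biUnion, mem_range, mem_powersetCard, subset_univ, true_and]
    exact ⟨hammingNorm w, Nat.lt_succ_of_le (mem_hammingBall.1 hw), _, rfl,
      mem_wordsWithSupport_support w⟩
  calc #(hammingBall ι F r) ≤ _ := card_le_card hcover
    _ ≤ _ := card_biUnion_le
    _ ≤ _ := sum_le_sum fun i _ => card_biUnion_le.trans_eq <| by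
        simp_rw [card_wordsWithSupport]
        rw [sum_congr rfl fun s hs => by rw [(mem_powersetCard.1 hs).2], sum_const,
          card_powersetCard, card_univ, smul_eq_mul]

theorem hammingBall_eq_univ {r : ℕ} (hr : Fintype.card ι ≤ r) : hammingBall ι F r = univ :=
  eq_univ_of_forall fun _ => mem_hammingBall.2 (hammingNorm_le_card_fintype.trans hr)

theorem lt_card_of_sum_choose_mul_pow_lt {r k : ℕ} (hk : 1 ≤ k) (hkn : k ≤ Fintype.card ι)
    (hGV : ∑ i ∈ range (r + 1), (Fintype.card ι).choose i * (Fintype.card F - 1) ^ i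
      < Fintype.card F ^ (Fintype.card ι - k + 1)) :
    r < Fintype.card ι := by
  by_contra! hr
  have hball := card_hammingBall_le (ι := ι) (F := F) r
  rw [hammingBall_eq_univ hr, card_univ, Fintype.card_fun] at hball
  have := Nat.pow_le_pow_right (Fintype.card_pos_iff.2 ⟨(0 : F)⟩)
    (show Fintype.card ι - k + 1 ≤ Fintype.card ι by omega)
  omega

end HammingBall

section MinDist

variable {ι F : Type*} [Fintype ι] [Field F] [DecidableEq F]

def MinDistGT (C : Submodule F (ι → F)) (r : ℕ) : Prop :=
  ∀ c ∈ C, c ≠ 0 → r < hammingNorm c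

theorem minDistGT_span_one {r : ℕ} (hr : r < Fintype.card ι) :
    MinDistGT (Submodule.span F {fun _ : ι => (1 : F)}) r := by
  intro c hc hc0
  obtain ⟨a, rfl⟩ := Submodule.mem_span_singleton.1 hc
  have ha : a ≠ 0 := by rintro rfl; exact hc0 (zero_smul F _)
  rw [hammingNorm_smul fun _ => smul_right_injective F ha]
  simpa [hammingNorm] using hr

theorem MinDistGT.sup_span_singleton {C : Submodule F (ι → F)} {r : ℕ} (hC : MinDistGT C r)
    {v : ι → F} (hv : ∀ c ∈ C, r < hammingNorm (v - c)) :
    MinDistGT (C ⊔ Submodule.span F {v}) r := by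
  intro x hx hx0
  obtain ⟨c, hc, _, hz, rfl⟩ := Submodule.mem_sup.1 hx
  obtain ⟨a, rfl⟩ := Submodule.mem_span_singleton.1 hz
  rcases eq_or_ne a 0 with rfl | ha
  · rw [zero_smul, add_zero] at hx0 ⊢
    exact hC c hc hx0
  · have hscale : c + a • v = a • (v - -(a⁻¹ • c)) := by
      rw [sub_neg_eq_add, smul_add, smul_smul, mul_inv_cancel₀ ha, one_smul, add_comm]
    rw [hscale, hammingNorm_smul fun _ => smul_right_injective F ha]
    exact hv _ (C.neg_mem (C.smul_mem _ hc))

variable [DecidableEq ι] [Fintype F]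

theorem exists_forall_lt_hammingNorm_sub (C : Submodule F (ι → F)) {r : ℕ}
    (h : Nat.card C * #(hammingBall ι F r) < Fintype.card F ^ Fintype.card ι) :
    ∃ v, ∀ c ∈ C, r < hammingNorm (v - c) := by
  classical
  by_contra! hcov
  have hsub : (univ : Finset (ι → F)) ⊆ (C : Set (ι → F)).toFinset + hammingBall ι F r := by
    intro v _
    obtain ⟨c, hc, hvc⟩ := hcov v
    exact mem_add.2 ⟨c, by simpa using hc, v - c, mem_hammingBall.2 hvc, add_sub_cancel _ _⟩
  have := (card_le_card hsub).trans card_add_le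
  rw [card_univ, Fintype.card_fun, ← Nat.card_eq_card_toFinset] at this
  exact this.not_gt h

theorem MinDistGT.exists_le_finrank_eq {C : Submodule F (ι → F)} {r k : ℕ} (hC : MinDistGT C r)
    (hCk : Module.finrank F C ≤ k) (hkn : k ≤ Fintype.card ι)
    (hGV : ∑ i ∈ range (r + 1), (Fintype.card ι).choose i * (Fintype.card F - 1) ^ i
      < Fintype.card F ^ (Fintype.card ι - k + 1)) :
    ∃ C' : Submodule F (ι → F), C ≤ C' ∧ Module.finrank F C' = k ∧ MinDistGT C' r := by
  set n := Fintype.card ι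
  set q := Fintype.card F
  set V := ∑ i ∈ range (r + 1), n.choose i * (q - 1) ^ i
  induction k, hCk using Nat.le_induction with
  | base => exact ⟨C, le_rfl, rfl, hC⟩
  | succ m _ ih =>
    have hq : 0 < q := Fintype.card_pos
    obtain ⟨C', hCC', hm, hC'⟩ := ih (by omega)
      (hGV.trans_le (Nat.pow_le_pow_right hq (by omega)))
    have hcount : Nat.card C' * #(hammingBall ι F r) < q ^ n := calc
      Nat.card C' * #(hammingBall ι F r) ≤ q ^ m * V := by
        rw [Module.natCard_eq_pow_finrank (K := F), hm, Nat.card_eq_fintype_card]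
        exact Nat.mul_le_mul_left _ (card_hammingBall_le r)
      _ < q ^ m * q ^ (n - (m + 1) + 1) := Nat.mul_lt_mul_of_pos_left hGV (Nat.pow_pos hq)
      _ = q ^ n := by rw [← pow_add]; congr 1; omega
    obtain ⟨v, hv⟩ := exists_forall_lt_hammingNorm_sub C' hcount
    have hvC' : v ∉ C' := fun hvC' => by simpa using hv v hvC'
    exact ⟨C' ⊔ Submodule.span F {v}, hCC'.trans le_sup_left,
      by rw [Submodule.finrank_sup_span_singleton hvC', hm], hC'.sup_span_singleton hv⟩

end MinDist

/-- GV-type existence of an `[n,k]_q` code of minimum distance at least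
`2(t + ⌊u/q⌋) + 1` containing the all-one word. -/
theorem gv_code_with_allone (F : Type) [Field F] [Fintype F] [DecidableEq F]
    (q n k t u : ℕ) (hq : Fintype.card F = q) (hk : 1 ≤ k) (hkn : k ≤ n)
    (hGV : ∑ i ∈ Finset.range (2 * (t + u / q) + 1), n.choose i * (q - 1) ^ i
      < q ^ (n - k + 1)) :
    ∃ C : Submodule F (Fin n → F), Module.finrank F C = k ∧
      (fun _ : Fin n => (1 : F)) ∈ C ∧
      (∀ c ∈ C, c ≠ 0 → 2 * (t + u / q) + 1 ≤ hammingNorm c) := by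
  subst hq
  rw [← Fintype.card_fin n] at hkn hGV
  have hr := lt_card_of_sum_choose_mul_pow_lt hk hkn hGV
  have hone : (fun _ : Fin n => (1 : F)) ≠ 0 :=
    Function.ne_iff.2 ⟨⟨0, by simpa using (Nat.zero_le _).trans_lt hr⟩, one_ne_zero⟩
  obtain ⟨C, hrep, hdim, hC⟩ := (minDistGT_span_one (F := F) hr).exists_le_finrank_eq
    (by rw [finrank_span_singleton hone]; exact hk) hkn hGV
  exact ⟨C, hdim, hrep (Submodule.mem_span_singleton_self _), hC⟩
end
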